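/- arXiv:2602.00683 — 3 statements merged into one kernel-verified Lean document; each statement's English description precedes it below -/
import Mathlib

section
/- For every real λ with 0 ≤ λ ≤ π/2, both L_con and L_ang are differentiable at λ, and the magnitude of the derivative of the angular-margin loss is bounded by that of the plain contrastive loss: |dL_ang/dλ (λ)| ≤ |dL_con/dλ (λ)|. (This is the regularization theorem: the subtracted angular margin decays the gradient norm of the contrastive objective on positive pairs.) -/
open Set Real

/-- The plain contrastive loss in the positive-pair angle. -/
noncomputable def Lcon (τ S x : ℝ) : ℝ :=
  -Real.log (Real.exp (Real.cos x / τ) / (Real.exp (Real.cos x / τ) + S))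

/-- The subtractive angular-margin contrastive loss in the positive-pair angle. -/
noncomputable def Lang (τ S μ x : ℝ) : ℝ :=
  -Real.log (Real.exp (Real.cos (max (x - μ) 0) / τ) /
    (Real.exp (Real.cos (max (x - μ) 0) / τ) + S))

lemma hasDerivAt_cosMax (μ x : ℝ) :
    HasDerivAt (fun y => Real.cos (max (y - μ) 0)) (-Real.sin (max (x - μ) 0)) x := by
  have hcos : ∀ z : ℝ, HasDerivAt (fun y => Real.cos (y - μ)) (-Real.sin (z - μ)) z := by
    intro z
    simpa [Function.comp_def] using (Real.hasDerivAt_cos (z - μ)).comp z ((hasDerivAt_id z).sub_const μ)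
  rcases lt_trichotomy x μ with h | h | h
  · rw [max_eq_right (by linarith : x - μ ≤ 0), Real.sin_zero, neg_zero]
    apply (hasDerivAt_const x (1 : ℝ)).congr_of_eventuallyEq
    filter_upwards [Iio_mem_nhds h] with y hy
    rw [max_eq_right (by linarith [Set.mem_Iio.1 hy] : y - μ ≤ 0), Real.cos_zero]
  · subst h
    rw [sub_self, max_self, Real.sin_zero, neg_zero]
    have h1 : HasDerivWithinAt (fun y => Real.cos (max (y - x) 0)) 0 (Set.Iic x) x := by
      apply (hasDerivWithinAt_const x (Set.Iic x) (1 : ℝ)).congr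
      · intro y hy
        rw [max_eq_right (by linarith [Set.mem_Iic.1 hy] : y - x ≤ 0), Real.cos_zero]
      · rw [sub_self, max_self, Real.cos_zero]
    have h2 : HasDerivWithinAt (fun y => Real.cos (max (y - x) 0)) 0 (Set.Ici x) x := by
      have h0 : -Real.sin (x - x) = 0 := by simp
      apply HasDerivWithinAt.congr (h0 ▸ (hcos x).hasDerivWithinAt)
      · intro y hy
        rw [max_eq_left (by linarith [Set.mem_Ici.1 hy] : (0 : ℝ) ≤ y - x)]
      · simp
    have := h1.union h2
    rw [Set.Iic_union_Ici] at this
    exact hasDerivWithinAt_univ.mp this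
  · rw [max_eq_left (by linarith : (0 : ℝ) ≤ x - μ)]
    apply (hcos x).congr_of_eventuallyEq
    filter_upwards [Ioi_mem_nhds h] with y hy
    rw [max_eq_left (by linarith [Set.mem_Ioi.1 hy] : (0 : ℝ) ≤ y - μ)]

lemma hasDerivAt_G (τ S : ℝ) (hτ : 0 < τ) (hS : 0 < S) (u : ℝ) :
    HasDerivAt (fun v => -Real.log (Real.exp (v / τ) / (Real.exp (v / τ) + S)))
      (-(S / (τ * (Real.exp (u / τ) + S)))) u := by
  have heq : (fun v => -Real.log (Real.exp (v / τ) / (Real.exp (v / τ) + S)))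
      = fun v => -(v / τ) + Real.log (Real.exp (v / τ) + S) := by
    funext v
    have hE : (0 : ℝ) < Real.exp (v / τ) + S := by positivity
    rw [Real.log_div (Real.exp_ne_zero _) (ne_of_gt hE), Real.log_exp]
    ring
  rw [heq]
  have h1 : HasDerivAt (fun v : ℝ => v / τ) (1 / τ) u := (hasDerivAt_id u).div_const τ
  have h2 := h1.exp
  have hE : (0 : ℝ) < Real.exp (u / τ) + S := by positivity
  have h4 := (h2.add_const S).log (ne_of_gt hE)
  have h5 := h1.neg.add h4
  refine h5.congr_deriv ?_
  have hτ' : τ ≠ 0 := ne_of_gt hτ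
  field_simp
  ring

/-- The subtracted angular margin decays the gradient norm of the contrastive
objective on positive pairs: on `[0, π/2]` both losses are differentiable and
`|dL_ang/dλ| ≤ |dL_con/dλ|`. -/
theorem margin_decays_gradient (τ S μ : ℝ) (hτ : 0 < τ) (hS : 0 < S) (hμ : 0 ≤ μ)
    (x : ℝ) (hx0 : 0 ≤ x) (hx : x ≤ Real.pi / 2) :
    DifferentiableAt ℝ (Lcon τ S) x ∧ DifferentiableAt ℝ (Lang τ S μ) x ∧
      |deriv (Lang τ S μ) x| ≤ |deriv (Lcon τ S) x| := by
  set m : ℝ := max (x - μ) 0 with hm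
  have hm0 : 0 ≤ m := le_max_right _ _
  have hmx : m ≤ x := max_le (by linarith) hx0
  have hLcon : HasDerivAt (Lcon τ S)
      (-(S / (τ * (Real.exp (Real.cos x / τ) + S))) * (-Real.sin x)) x := by
    have := (hasDerivAt_G τ S hτ hS (Real.cos x)).comp x (Real.hasDerivAt_cos x)
    show HasDerivAt (fun y => Lcon τ S y) _ x
    simpa [Lcon, Function.comp_def] using this
  have hLang : HasDerivAt (Lang τ S μ)
      (-(S / (τ * (Real.exp (Real.cos m / τ) + S))) * (-Real.sin m)) x := by
    have := (hasDerivAt_G τ S hτ hS (Real.cos m)).comp x (hasDerivAt_cosMax μ x)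
    show HasDerivAt (fun y => Lang τ S μ y) _ x
    simpa [Lang, Function.comp_def, hm] using this
  refine ⟨hLcon.differentiableAt, hLang.differentiableAt, ?_⟩
  rw [hLcon.deriv, hLang.deriv]
  have hsinm : 0 ≤ Real.sin m :=
    Real.sin_nonneg_of_nonneg_of_le_pi hm0 (by linarith [Real.pi_pos])
  have hsinx : Real.sin m ≤ Real.sin x :=
    Real.sin_le_sin_of_le_of_le_pi_div_two (by linarith [Real.pi_pos]) hx hmx
  have hcos : Real.cos x ≤ Real.cos m :=
    Real.cos_le_cos_of_nonneg_of_le_pi hm0 (by linarith [Real.pi_pos]) hmx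
  have habs : ∀ a b : ℝ, 0 ≤ a → 0 ≤ b → |-a * -b| = a * b := by
    intro a b ha hb
    rw [neg_mul_neg, abs_of_nonneg (mul_nonneg ha hb)]
  rw [habs _ _ (by positivity) hsinm, habs _ _ (by positivity) (hsinm.trans hsinx)]
  gcongr
end

section
/- The function x ↦ sin x · S / (S + exp(cos x / τ)) is monotonically nondecreasing on the interval [0, π/2]. -/
open Real Set

lemma antitone_div_add_exp_div {S τ : ℝ} (hS : 0 ≤ S) (hτ : 0 ≤ τ) :
    Antitone fun c : ℝ => S / (S + exp (c / τ)) := by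
  intro c d hcd
  have hexp : exp (c / τ) ≤ exp (d / τ) := exp_le_exp.mpr (div_le_div_of_nonneg_right hcd hτ)
  exact div_le_div_of_nonneg_left hS (by positivity) (by linarith)

lemma monotoneOn_div_add_exp_cos_div {S τ : ℝ} (hS : 0 ≤ S) (hτ : 0 ≤ τ) :
    MonotoneOn (fun x : ℝ => S / (S + exp (cos x / τ))) (Icc 0 π) :=
  (antitone_div_add_exp_div hS hτ).comp_antitoneOn antitoneOn_cos

/-- The function `x ↦ sin x · S / (S + exp(cos x / τ))` is monotonically
nondecreasing on `[0, π/2]`. -/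
theorem derivFactor_monotoneOn (τ S : ℝ) (hτ : 0 < τ) (hS : 0 < S) :
    MonotoneOn (fun x : ℝ => Real.sin x * (S / (S + Real.exp (Real.cos x / τ))))
      (Set.Icc 0 (Real.pi / 2)) := by
  have hπ : Icc 0 (π / 2) ⊆ Icc 0 π := Icc_subset_Icc_right (by linarith [pi_pos])
  have hsin : MonotoneOn sin (Icc 0 (π / 2)) :=
    strictMonoOn_sin.monotoneOn.mono (Icc_subset_Icc_left (by linarith [pi_pos]))
  exact hsin.mul ((monotoneOn_div_add_exp_cos_div hS.le hτ.le).mono hπ)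
    (fun x hx => sin_nonneg_of_mem_Icc (hπ hx)) (fun x _ => by positivity)
end

section
/- The function θ ↦ (1/M) Σ_{i=1}^{M} L^meta_i(Θ̂(θ)) is differentiable at θ⁰, and the one-step meta update θ¹ = θ⁰ − β · ∇_θ [ (1/M) Σ_{i=1}^{M} L^meta_i(Θ̂(θ)) ] evaluated at θ = θ⁰ satisfies θ¹ = θ⁰ + (αβ/(B·M)) Σ_{i=1}^{M} Σ_{j=1}^{B} G_{ij} · ∇w_j(θ⁰), where G_{ij} = ⟨ ∇L^meta_i(Θ̂(θ⁰)), ∇L_j(Θ⁰) ⟩ is the inner product of the meta-loss gradient with the training-loss gradient. -/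
/-- The one-step meta update of the MLP parameter follows the gradients of the
sample-weight functions, with coefficients `G_{ij}` given by the inner product
of the meta-loss gradient with the training-loss gradient. -/
theorem meta_update_formula
    {E F : Type*} [NormedAddCommGroup E] [InnerProductSpace ℝ E] [FiniteDimensional ℝ E]
    [NormedAddCommGroup F] [InnerProductSpace ℝ F] [FiniteDimensional ℝ F]
    (Θ0 : E) (θ0 : F) (α β : ℝ) (B M : ℕ) (hB : 0 < B) (hM : 0 < M)
    (L : Fin B → E → ℝ) (hL : ∀ j, DifferentiableAt ℝ (L j) Θ0)
    (w : Fin B → F → ℝ) (hw : ∀ j, DifferentiableAt ℝ (w j) θ0)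
    (Θhat : F → E)
    (hΘhat : ∀ θ : F, Θhat θ = Θ0 - (α / (B : ℝ)) • ∑ j, w j θ • gradient (L j) Θ0)
    (Lmeta : Fin M → E → ℝ) (hLmeta : ∀ i, DifferentiableAt ℝ (Lmeta i) (Θhat θ0)) :
    DifferentiableAt ℝ (fun θ : F => (1 / (M : ℝ)) * ∑ i, Lmeta i (Θhat θ)) θ0 ∧
    θ0 - β • gradient (fun θ : F => (1 / (M : ℝ)) * ∑ i, Lmeta i (Θhat θ)) θ0 =
      θ0 + (α * β / ((B : ℝ) * (M : ℝ))) • ∑ i : Fin M, ∑ j : Fin B,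
        (inner ℝ (gradient (Lmeta i) (Θhat θ0)) (gradient (L j) Θ0) : ℝ) •
          gradient (w j) θ0 := by
  classical
  set c : Fin B → E := fun j => gradient (L j) Θ0 with hc
  set gw : Fin B → F := fun j => gradient (w j) θ0 with hgw
  set gm : Fin M → E := fun i => gradient (Lmeta i) (Θhat θ0) with hgm
  -- derivative of Θhat
  have h1 : ∀ j : Fin B, HasFDerivAt (fun θ => w j θ • c j)
      ((InnerProductSpace.toDual ℝ F (gw j)).smulRight (c j)) θ0 :=
    fun j => ((hw j).hasGradientAt.hasFDerivAt).smul_const (c j)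
  have hsum := HasFDerivAt.fun_sum (fun j (_ : j ∈ Finset.univ) => h1 j)
  have hA : HasFDerivAt Θhat
      (-((α / (B : ℝ)) • ∑ j, ((InnerProductSpace.toDual ℝ F (gw j)).smulRight (c j)))) θ0 := by
    have := (hsum.const_smul (α / (B : ℝ))).const_sub Θ0
    have heq : (fun θ => Θ0 - (α / (B : ℝ)) • ∑ j, w j θ • c j) = Θhat := by
      funext θ; rw [hΘhat θ]
    simp only [Pi.smul_apply] at this
    rw [heq] at this
    convert this using 1
  set A : F →L[ℝ] E :=
    -((α / (B : ℝ)) • ∑ j, ((InnerProductSpace.toDual ℝ F (gw j)).smulRight (c j))) with hAdef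
  -- derivative of each composite
  have hcomp : ∀ i : Fin M, HasFDerivAt (fun θ => Lmeta i (Θhat θ))
      ((InnerProductSpace.toDual ℝ E (gm i)).comp A) θ0 :=
    fun i => ((hLmeta i).hasGradientAt.hasFDerivAt).comp θ0 hA
  have hsum2 := HasFDerivAt.fun_sum (fun i (_ : i ∈ Finset.univ) => hcomp i)
  have hg : HasFDerivAt (fun θ : F => (1 / (M : ℝ)) * ∑ i, Lmeta i (Θhat θ))
      ((1 / (M : ℝ)) • ∑ i, ((InnerProductSpace.toDual ℝ E (gm i)).comp A)) θ0 := by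
    simpa [smul_eq_mul] using hsum2.const_mul (1 / (M : ℝ))
  -- identify the gradient
  set v : F := -((α / ((B : ℝ) * (M : ℝ))) •
      ∑ i : Fin M, ∑ j : Fin B, (inner ℝ (gm i) (c j) : ℝ) • gw j) with hv
  have hDv : ((1 / (M : ℝ)) • ∑ i, ((InnerProductSpace.toDual ℝ E (gm i)).comp A))
      = InnerProductSpace.toDual ℝ F v := by
    ext x
    simp only [hv, ContinuousLinearMap.smul_apply, ContinuousLinearMap.sum_apply,
      ContinuousLinearMap.comp_apply, hAdef, ContinuousLinearMap.neg_apply,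
      ContinuousLinearMap.smulRight_apply, InnerProductSpace.toDual_apply_apply,
      inner_neg_left, inner_smul_left, inner_sum, sum_inner, real_inner_smul_left,
      smul_eq_mul, map_neg, map_smul, map_sum]
    simp only [Finset.mul_sum, mul_neg, Finset.sum_neg_distrib, neg_inj]
    refine Finset.sum_congr rfl fun i _ => Finset.sum_congr rfl fun j _ => ?_
    have hBM : (M : ℝ) ≠ 0 := Nat.cast_ne_zero.mpr hM.ne'
    have hBn : (B : ℝ) ≠ 0 := Nat.cast_ne_zero.mpr hB.ne'
    field_simp
  have hgrad : HasGradientAt (fun θ : F => (1 / (M : ℝ)) * ∑ i, Lmeta i (Θhat θ)) v θ0 := by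
    rw [hasGradientAt_iff_hasFDerivAt, ← hDv]; exact hg
  refine ⟨hgrad.differentiableAt, ?_⟩
  rw [hgrad.gradient, hv]
  rw [smul_neg, sub_neg_eq_add, smul_smul]
  congr 2
  have hBM : (M : ℝ) ≠ 0 := Nat.cast_ne_zero.mpr hM.ne'
  have hBn : (B : ℝ) ≠ 0 := Nat.cast_ne_zero.mpr hB.ne'
  field_simp
end
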